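/- Let p_i ≥ 0, Σ_{i=1}^n p_i = 1, and for T ∈ [n] let C(I,T) be the online-bidding cost of increasing sequence I under threshold T. If every randomized bidding strategy (distribution π over increasing sequences Γ) satisfies max_{T∈[n]} E_{I~π}[C(I,T)]/T ≥ e − ε, then there exists a distribution p on [n] such that min_{I∈Γ} E_{T~p}[C(I,T)]/E_{T~p}[T] ≥ e − ε. -/

import Mathlib

/-! Put `c = e - ε` and consider the matrix game with payoff `C(I,T) - c·T` (bid sequence `I`
against threshold `T`). The hypothesis says that every mixed strategy of the bidder has a pure
threshold reply of nonnegative payoff. A saddle point of the bilinear payoff on the product of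
the two probability simplices (Sion's minimax theorem) turns this into a mixed threshold
distribution `p` whose payoff is nonnegative against every bid sequence, and dividing by
`E_p[T] > 0` gives the ratio bound. -/

/-- Online-bidding cost: bid sequences on [n+1] are sets I of Fin (n+1), where
element b encodes the bid value b+1; the threshold T encodes the value T+1.
C(I,T) is the sum of the bid values up to and including the first bid ≥ T. -/
noncomputable def bidCost {n : ℕ} (I : Finset (Fin n)) (T : Fin n) : ℕ :=
  ∑ b ∈ I.filter (fun b => b.val ≤ sInf {x : ℕ | ∃ b' ∈ I, T ≤ b' ∧ (b' : ℕ) = x}),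
    ((b : ℕ) + 1)

open Matrix

theorem Matrix.exists_mem_stdSimplex_forall_le_mulVec {ι κ : Type*} [Fintype ι] [Fintype κ]
    [Nonempty ι] [Nonempty κ] (A : Matrix ι κ ℝ) (v : ℝ)
    (h : ∀ x ∈ stdSimplex ℝ ι, ∃ j, v ≤ (x ᵥ* A) j) :
    ∃ y ∈ stdSimplex ℝ κ, ∀ i, v ≤ (A *ᵥ y) i := by
  classical
  let B : (ι → ℝ) →ₗ[ℝ] (κ → ℝ) →ₗ[ℝ] ℝ := toLinearMap₂' ℝ A
  obtain ⟨x, hx, y, hy, hxy⟩ := Sion.exists_isSaddlePointOn (f := fun x y ↦ B x y)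
    ⟨_, single_mem_stdSimplex ℝ (Classical.arbitrary ι)⟩ (convex_stdSimplex ℝ ι)
    (isCompact_stdSimplex ℝ ι)
    (fun y _ ↦ (B.flip y).continuous_of_finiteDimensional.continuousOn.lowerSemicontinuousOn)
    (fun y _ ↦ ((B.flip y).convexOn (convex_stdSimplex ℝ ι)).quasiconvexOn)
    (convex_stdSimplex ℝ κ) ⟨_, single_mem_stdSimplex ℝ (Classical.arbitrary κ)⟩
    (isCompact_stdSimplex ℝ κ)
    (fun x _ ↦ (B x).continuous_of_finiteDimensional.continuousOn.upperSemicontinuousOn)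
    (fun x _ ↦ ((B x).concaveOn (convex_stdSimplex ℝ κ)).quasiconcaveOn)
  refine ⟨y, hy, fun i ↦ ?_⟩
  obtain ⟨j, hj⟩ := h x hx
  calc v ≤ (x ᵥ* A) j := hj
    _ = B x (Pi.single j 1) := by
      rw [toLinearMap₂'_apply', dotProduct_mulVec, dotProduct_single_one]
    _ ≤ B (Pi.single i 1) y :=
      hxy _ (single_mem_stdSimplex ℝ i) _ (single_mem_stdSimplex ℝ j)
    _ = (A *ᵥ y) i := by rw [toLinearMap₂'_apply', single_one_dotProduct]

theorem sum_mul_pos_of_mem_stdSimplex {ι : Type*} [Fintype ι] {p f : ι → ℝ}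
    (hp : p ∈ stdSimplex ℝ ι) (hf : ∀ i, 0 < f i) : 0 < ∑ i, p i * f i := by
  obtain ⟨i, -, hi⟩ : ∃ i ∈ Finset.univ, 0 < p i :=
    Finset.exists_lt_of_sum_lt (by simp [hp.2])
  exact Finset.sum_pos' (fun j _ ↦ mul_nonneg (hp.1 j) (hf j).le) ⟨i, by simp, mul_pos hi (hf i)⟩

/-- If every randomized bidding strategy π over increasing sequences Γ (sets
containing the top bid n) satisfies max_T E_π[C(I,T)]/T ≥ e - ε, then there is a
distribution p on thresholds with min_I E_p[C(I,T)]/E_p[T] ≥ e - ε. -/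
theorem stmt19 (n : ℕ) (ε : ℝ)
    (h : ∀ π : {I : Finset (Fin (n + 1)) // Fin.last n ∈ I} → ℝ,
        (∀ I, 0 ≤ π I) → (∑ I, π I) = 1 →
        ∃ T : Fin (n + 1),
          Real.exp 1 - ε ≤ (∑ I, π I * (bidCost I.1 T : ℝ)) / ((T : ℝ) + 1)) :
    ∃ p : Fin (n + 1) → ℝ, (∀ T, 0 ≤ p T) ∧ (∑ T, p T) = 1 ∧
      ∀ I : {I : Finset (Fin (n + 1)) // Fin.last n ∈ I},
        Real.exp 1 - ε
          ≤ (∑ T, p T * (bidCost I.1 T : ℝ)) / (∑ T, p T * ((T : ℝ) + 1)) := by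
  set c := Real.exp 1 - ε
  have : Nonempty {I : Finset (Fin (n + 1)) // Fin.last n ∈ I} :=
    ⟨⟨{Fin.last n}, Finset.mem_singleton_self _⟩⟩
  let A : Matrix {I : Finset (Fin (n + 1)) // Fin.last n ∈ I} (Fin (n + 1)) ℝ :=
    of fun I T ↦ (bidCost I.1 T : ℝ) - c * ((T : ℝ) + 1)
  have hA : ∀ π ∈ stdSimplex ℝ _, ∃ T, 0 ≤ (π ᵥ* A) T := by
    intro π hπ
    obtain ⟨T, hT⟩ := h π hπ.1 hπ.2
    rw [le_div_iff₀ (by positivity)] at hT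
    have hπA : (π ᵥ* A) T = ∑ I, π I * (bidCost I.1 T : ℝ) - c * ((T : ℝ) + 1) := by
      simp only [A, vecMul, dotProduct, of_apply, mul_sub, Finset.sum_sub_distrib,
        ← Finset.sum_mul, hπ.2, one_mul]
    exact ⟨T, by linarith⟩
  obtain ⟨p, hp, hpA⟩ := exists_mem_stdSimplex_forall_le_mulVec A 0 hA
  refine ⟨p, hp.1, hp.2, fun I ↦ ?_⟩
  rw [le_div_iff₀ (sum_mul_pos_of_mem_stdSimplex hp fun T ↦ by positivity)]
  have hAp : (A *ᵥ p) I = ∑ T, p T * (bidCost I.1 T : ℝ) - c * ∑ T, p T * ((T : ℝ) + 1) := by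
    simp only [A, mulVec, dotProduct, of_apply, Finset.mul_sum, ← Finset.sum_sub_distrib]
    exact Finset.sum_congr rfl fun T _ ↦ by ring
  linarith [hpA I]
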